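/- arXiv:1601.03241 — 2 statements merged into one kernel-verified Lean document; each statement's English description precedes it below -/
import Mathlib

section
/- A connected graph G with n vertices and m edges satisfies tmc(G) = m + n if and only if G is a complete graph. -/
open SimpleGraph

/-- A walk is a *total monochromatic path* (w.r.t. a vertex coloring `vcol` and an
edge coloring `ecol`) if it is a path and all its edges and internal vertices
share one common color. -/
def IsTMCPath {V : Type*} (G : SimpleGraph V) (vcol : V → ℕ) (ecol : Sym2 V → ℕ)
    {u v : V} (p : G.Walk u v) : Prop :=
  p.IsPath ∧ ∃ c : ℕ, (∀ e ∈ p.edges, ecol e = c) ∧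
    ∀ w ∈ p.support, w ≠ u → w ≠ v → vcol w = c

/-- A total coloring (vertex coloring `vcol` together with edge coloring `ecol`) is a
*TMC-coloring* if any two vertices are connected by a total monochromatic path. -/
def IsTMCColoring {V : Type*} (G : SimpleGraph V) (vcol : V → ℕ) (ecol : Sym2 V → ℕ) : Prop :=
  ∀ u v : V, ∃ p : G.Walk u v, IsTMCPath G vcol ecol p

/-- The number of colors used by a total coloring: colors on vertices together with
colors on (actual) edges of `G`. -/
noncomputable def totalColorsUsed {V : Type*} (G : SimpleGraph V)
    (vcol : V → ℕ) (ecol : Sym2 V → ℕ) : ℕ :=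
  (Set.range vcol ∪ ecol '' G.edgeSet).ncard

/-- The total monochromatic connection number `tmc G`: the maximum number of colors
used in a TMC-coloring of `G`. -/
noncomputable def tmc {V : Type*} (G : SimpleGraph V) : ℕ :=
  sSup { k | ∃ vcol ecol, IsTMCColoring G vcol ecol ∧ totalColorsUsed G vcol ecol = k }

/-- An edge coloring is an *MC-coloring* if any two vertices are connected by a
monochromatic path (all edges of one color). -/
def IsMCColoring {V : Type*} (G : SimpleGraph V) (ecol : Sym2 V → ℕ) : Prop :=
  ∀ u v : V, ∃ p : G.Walk u v, p.IsPath ∧ ∃ c : ℕ, ∀ e ∈ p.edges, ecol e = c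

/-- The monochromatic connection number `mc G`. -/
noncomputable def mc {V : Type*} (G : SimpleGraph V) : ℕ :=
  sSup { k | ∃ ecol : Sym2 V → ℕ, IsMCColoring G ecol ∧ (ecol '' G.edgeSet).ncard = k }

/-- A vertex coloring is an *MVC-coloring* if any two vertices are connected by a
vertex-monochromatic path (all internal vertices of one color). -/
def IsMVCColoring {V : Type*} (G : SimpleGraph V) (vcol : V → ℕ) : Prop :=
  ∀ u v : V, ∃ p : G.Walk u v, p.IsPath ∧ ∃ c : ℕ,
    ∀ w ∈ p.support, w ≠ u → w ≠ v → vcol w = c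

/-- The monochromatic vertex connection number `mvc G`. -/
noncomputable def mvc {V : Type*} (G : SimpleGraph V) : ℕ :=
  sSup { k | ∃ vcol : V → ℕ, IsMVCColoring G vcol ∧ (Set.range vcol).ncard = k }

/-- The number of leaves (vertices of degree one) of a graph. -/
noncomputable def leafCount {V : Type*} (G : SimpleGraph V) : ℕ :=
  {v : V | (G.neighborSet v).ncard = 1}.ncard

/-- `maxLeaves G = l(G)`: the maximum number of leaves over all spanning trees of `G`. -/
noncomputable def maxLeaves {V : Type*} (G : SimpleGraph V) : ℕ :=
  sSup { k | ∃ T : SimpleGraph V, T ≤ G ∧ T.IsTree ∧ leafCount T = k }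


/- A total coloring uses at most one color per vertex and per edge, so `tmc G ≤ m + n`.
If `m + n` colors are used, distinct edges get distinct colors, so every total monochromatic path
has at most one edge, and any two distinct vertices must be adjacent. Conversely, in a complete
graph any total coloring is a TMC-coloring, since the single edge `uv` has no internal vertex,
and giving all vertices and edges distinct colors uses `m + n` colors. -/

theorem ncard_range_le_card {α β : Type*} [Fintype α] (f : α → β) :
    (Set.range f).ncard ≤ Fintype.card α := by
  rw [← Set.image_univ, ← Nat.card_eq_fintype_card, ← Set.ncard_univ]
  exact Set.ncard_image_le

section TotalColoring

variable {V : Type*} [Fintype V] (G : SimpleGraph V)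

theorem totalColorsUsed_le_ncard_image_add_card (vcol : V → ℕ) (ecol : Sym2 V → ℕ) :
    totalColorsUsed G vcol ecol ≤ (ecol '' G.edgeSet).ncard + Fintype.card V :=
  calc totalColorsUsed G vcol ecol
      ≤ (Set.range vcol).ncard + (ecol '' G.edgeSet).ncard := Set.ncard_union_le _ _
    _ ≤ (ecol '' G.edgeSet).ncard + Fintype.card V := by
      rw [add_comm]
      gcongr
      exact ncard_range_le_card vcol

theorem totalColorsUsed_le (vcol : V → ℕ) (ecol : Sym2 V → ℕ) :
    totalColorsUsed G vcol ecol ≤ G.edgeSet.ncard + Fintype.card V :=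
  (totalColorsUsed_le_ncard_image_add_card G vcol ecol).trans
    (Nat.add_le_add_right Set.ncard_image_le _)

theorem injOn_of_totalColorsUsed_eq {vcol : V → ℕ} {ecol : Sym2 V → ℕ}
    (h : totalColorsUsed G vcol ecol = G.edgeSet.ncard + Fintype.card V) :
    Set.InjOn ecol G.edgeSet := by
  refine Set.injOn_of_ncard_image_eq (le_antisymm Set.ncard_image_le ?_)
  have := totalColorsUsed_le_ncard_image_add_card G vcol ecol
  omega

theorem exists_totalColorsUsed_eq :
    ∃ vcol ecol, totalColorsUsed G vcol ecol = G.edgeSet.ncard + Fintype.card V := by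
  obtain ⟨f, hf⟩ := exists_injective_nat (V ⊕ Sym2 V)
  have hdisj : Disjoint (Set.range (f ∘ Sum.inl)) ((f ∘ Sum.inr) '' G.edgeSet) := by
    rw [Set.disjoint_left]
    rintro _ ⟨v, rfl⟩ ⟨e, -, he⟩
    exact Sum.inr_ne_inl (hf he)
  refine ⟨f ∘ Sum.inl, f ∘ Sum.inr, ?_⟩
  rw [totalColorsUsed, Set.ncard_union_eq hdisj, ← Set.image_univ,
    Set.ncard_image_of_injective _ (hf.comp Sum.inl_injective),
    Set.ncard_image_of_injective _ (hf.comp Sum.inr_injective), Set.ncard_univ,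
    Nat.card_eq_fintype_card, add_comm]

theorem totalColorsUsed_mem_upperBounds :
    G.edgeSet.ncard + Fintype.card V ∈ upperBounds
      {k | ∃ vcol ecol, IsTMCColoring G vcol ecol ∧ totalColorsUsed G vcol ecol = k} := by
  rintro _ ⟨vcol, ecol, -, rfl⟩
  exact totalColorsUsed_le G vcol ecol

theorem tmc_le : tmc G ≤ G.edgeSet.ncard + Fintype.card V :=
  csSup_le' (totalColorsUsed_mem_upperBounds G)

end TotalColoring

section TMC

variable {V : Type*} {G : SimpleGraph V}

theorem isTMCColoring_const (hG : G.Connected) (c : ℕ) :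
    IsTMCColoring G (fun _ => c) (fun _ => c) := by
  classical
  intro u v
  let p := (hG u v).some.toPath
  exact ⟨p, p.2, c, fun _ _ => rfl, fun _ _ _ _ => rfl⟩

theorem isTMCColoring_top (vcol : V → ℕ) (ecol : Sym2 V → ℕ) :
    IsTMCColoring (⊤ : SimpleGraph V) vcol ecol := by
  intro u v
  by_cases huv : u = v
  · subst huv
    exact ⟨Walk.nil, Walk.IsPath.nil, 0, by simp, by simp⟩
  · refine ⟨Walk.cons (show (⊤ : SimpleGraph V).Adj u v from huv) Walk.nil,
      Walk.IsPath.nil.cons (by simpa using huv), ecol s(u, v), by simp, ?_⟩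
    intro w hw hwu hwv
    simp_all

theorem IsTMCPath.adj {vcol : V → ℕ} {ecol : Sym2 V → ℕ} {u v : V} {p : G.Walk u v}
    (hp : IsTMCPath G vcol ecol p) (hinj : Set.InjOn ecol G.edgeSet) (huv : u ≠ v) :
    G.Adj u v := by
  obtain ⟨hpath, c, hec, -⟩ := hp
  match p, hpath, hec with
  | .nil, _, _ => exact (huv rfl).elim
  | .cons h .nil, _, _ => exact h
  | .cons (v := x) h (.cons (v := y) h' _), hpath, hec =>
    have hcol : ecol s(u, x) = ecol s(x, y) := (hec _ (by simp)).trans (hec _ (by simp)).symm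
    have hnd := hpath.edges_nodup
    simp only [Walk.edges_cons, List.nodup_cons, List.mem_cons] at hnd
    exact absurd (Or.inl (hinj h h' hcol)) hnd.1

theorem le_tmc [Fintype V] {vcol : V → ℕ} {ecol : Sym2 V → ℕ}
    (h : IsTMCColoring G vcol ecol) :
    totalColorsUsed G vcol ecol ≤ tmc G :=
  le_csSup ⟨_, totalColorsUsed_mem_upperBounds G⟩ ⟨vcol, ecol, h, rfl⟩

theorem exists_isTMCColoring_totalColorsUsed_eq_tmc [Fintype V] (hG : G.Connected) :
    ∃ vcol ecol, IsTMCColoring G vcol ecol ∧ totalColorsUsed G vcol ecol = tmc G :=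
  Nat.sSup_mem
    (s := {k | ∃ vcol ecol, IsTMCColoring G vcol ecol ∧ totalColorsUsed G vcol ecol = k})
    ⟨_, _, _, isTMCColoring_const hG 0, rfl⟩ ⟨_, totalColorsUsed_mem_upperBounds G⟩

end TMC

/-- A connected graph `G` with `n` vertices and `m` edges satisfies `tmc(G) = m + n`
if and only if `G` is a complete graph. -/
theorem stmt_5 {V : Type*} [Fintype V] (G : SimpleGraph V) (hG : G.Connected) :
    tmc G = G.edgeSet.ncard + Fintype.card V ↔ G = ⊤ := by
  constructor
  · intro htmc
    obtain ⟨vcol, ecol, hTMC, hcount⟩ := exists_isTMCColoring_totalColorsUsed_eq_tmc hG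
    have hinj := injOn_of_totalColorsUsed_eq G (hcount.trans htmc)
    ext u v
    refine ⟨G.ne_of_adj, fun huv => ?_⟩
    obtain ⟨p, hp⟩ := hTMC u v
    exact hp.adj hinj huv
  · rintro rfl
    obtain ⟨vcol, ecol, hcount⟩ := exists_totalColorsUsed_eq (⊤ : SimpleGraph V)
    exact le_antisymm (tmc_le _) (hcount ▸ le_tmc (isTMCColoring_top vcol ecol))
end

section
/- Let G be a connected graph of order n > 3 with m edges and diameter at least 3. Then tmc(G) = m − n + 2 + l(G). -/
open SimpleGraph

/-!
For the upper bound, fix `x`, `y` at distance at least `3`. Every vertex `w ≠ x, y` is joined by a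
monochromatic path to one of `x`, `y` that is not its neighbor; charging `w` to the color of that
path, every color class has more edges than charged vertices, so the edges carry at most
`m - n + 2` colors. A vertex whose color is not an edge color is never an inner vertex of a total
monochromatic path; the remaining vertices span a connected subgraph dominating `G`, so some
spanning tree has all these vertices as leaves, and they carry at most `l(G)` further colors.
For the lower bound, color the edges and inner vertices of a spanning tree with `l(G)` leaves
alike, and everything else with distinct new colors.
-/

namespace SimpleGraph

section Paths

variable {V : Type*} {G : SimpleGraph V}

lemma Walk.IsPath.ncard_neighborSet_ne_one {u v w : V} {p : G.Walk u v} (hp : p.IsPath)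
    (hw : w ∈ p.support) (hwu : w ≠ u) (hwv : w ≠ v) : (G.neighborSet w).ncard ≠ 1 := by
  obtain ⟨i, rfl, hi⟩ := Walk.mem_support_iff_exists_getVert.mp hw
  have hi0 : i ≠ 0 := by rintro rfl; exact hwu (Walk.getVert_zero p)
  have hil : i < p.length := lt_of_le_of_ne hi fun h => hwv (h ▸ Walk.getVert_length p)
  intro h1
  have hfin := Set.finite_of_ncard_pos (h1 ▸ Nat.one_pos)
  have := Set.ncard_le_ncard (p.toSubgraph.neighborSet_subset _) hfin
  rw [hp.ncard_neighborSet_toSubgraph_internal_eq_two hi0 hil] at this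
  omega

lemma ne_of_three_le_dist {x y : V} (hxy : 3 ≤ G.dist x y) : x ≠ y := by
  rintro rfl
  simp at hxy

lemma not_adj_of_adj_of_three_le_dist {x y z : V} (hxy : 3 ≤ G.dist x y) (hxz : G.Adj x z) :
    ¬ G.Adj z y := fun hzy => by
  have := G.dist_le (.cons hxz (.cons hzy .nil))
  simp at this
  omega

lemma exists_ne_not_adj_of_three_le_dist {x y : V} (hxy : 3 ≤ G.dist x y) (w : V) :
    ∃ u, u ≠ w ∧ ¬ G.Adj w u := by
  by_contra! h
  have hne := ne_of_three_le_dist hxy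
  have hdist {a b : V} (hab : G.Adj a b) : G.dist a b ≤ 1 := (dist_eq_one_iff_adj.mpr hab).le
  by_cases hxw : x = w
  · subst hxw
    have := hdist (h y hne.symm)
    omega
  by_cases hyw : y = w
  · subst hyw
    have := hdist (h x hxw).symm
    omega
  exact not_adj_of_adj_of_three_le_dist hxy (h x hxw).symm (h y hyw)

end Paths

section ColorClass

variable {V : Type*}

def colorClass (G : SimpleGraph V) (ecol : Sym2 V → ℕ) (c : ℕ) : SimpleGraph V where
  Adj a b := G.Adj a b ∧ ecol s(a, b) = c
  symm := ⟨fun a _ h => ⟨h.1.symm, Sym2.eq_swap (a := a) ▸ h.2⟩⟩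
  loopless := ⟨fun _ h => G.irrefl h.1⟩

variable {G : SimpleGraph V} {ecol : Sym2 V → ℕ} {c : ℕ}

lemma colorClass_le : G.colorClass ecol c ≤ G := fun _ _ h => h.1

lemma edgeSet_colorClass : (G.colorClass ecol c).edgeSet = {e ∈ G.edgeSet | ecol e = c} := by
  ext e
  induction e using Sym2.inductionOn with
  | _ a b => exact Iff.rfl

lemma reachable_colorClass_of_walk {u v : V} (p : G.Walk u v) (hp : ∀ e ∈ p.edges, ecol e = c) :
    (G.colorClass ecol c).Reachable u v :=
  ⟨p.transfer _ fun e he => by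
    rw [edgeSet_colorClass]
    exact ⟨p.edges_subset_edgeSet he, hp e he⟩⟩

end ColorClass

section ComponentEdges

variable {V : Type*} {F : SimpleGraph V}

def componentEdgeSet (F : SimpleGraph V) (a : V) : Set (Sym2 V) :=
  {e ∈ F.edgeSet | ∃ v ∈ e, F.Reachable a v}

lemma componentEdgeSet_subset (F : SimpleGraph V) (a : V) : F.componentEdgeSet a ⊆ F.edgeSet :=
  fun _ he => he.1

lemma disjoint_componentEdgeSet {a b : V} (h : ¬ F.Reachable a b) :
    Disjoint (F.componentEdgeSet a) (F.componentEdgeSet b) := by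
  refine Set.disjoint_left.mpr fun e ⟨heF, v, hve, hav⟩ ⟨_, w, hwe, hbw⟩ => h ?_
  by_cases hvw : v = w
  · exact hav.trans (hvw ▸ hbw.symm)
  · have hadj : F.Adj v w := by rwa [(Sym2.mem_and_mem_iff hvw).mp ⟨hve, hwe⟩] at heF
    exact (hav.trans hadj.reachable).trans hbw.symm

lemma Reachable.exists_adj_dist_lt {a v : V} (h : F.Reachable a v) (hva : v ≠ a) :
    ∃ u, F.Adj u v ∧ F.Reachable a u ∧ F.dist a u < F.dist a v := by
  obtain ⟨p, hp⟩ := h.symm.exists_walk_length_eq_dist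
  cases p with
  | nil => exact absurd rfl hva
  | cons hvu q =>
    refine ⟨_, hvu.symm, ⟨q.reverse⟩, ?_⟩
    have := F.dist_le q.reverse
    rw [dist_comm (u := a) (v := v), ← hp, Walk.length_cons]
    rw [Walk.length_reverse] at this
    omega

/-- Sending each vertex to the last edge of a shortest path to it from `a` is injective. -/
lemma ncard_le_ncard_componentEdgeSet [Finite V] (F : SimpleGraph V) {a : V}
    {S : Set V} (hS : ∀ v ∈ S, F.Reachable a v) (ha : a ∉ S) :
    S.ncard ≤ (F.componentEdgeSet a).ncard := by
  choose! f hf using fun v (hv : v ∈ S) =>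
    (hS v hv).exists_adj_dist_lt fun h => ha (h ▸ hv)
  refine Set.ncard_le_ncard_of_injOn (fun v => s(f v, v))
    (fun v hv => ⟨(hf v hv).1, f v, Sym2.mem_mk_left _ _, (hf v hv).2.1⟩) ?_
  intro v hv v' hv' h
  rcases Sym2.eq_iff.mp h with ⟨-, h⟩ | ⟨h₁, h₂⟩
  · exact h
  · have := (hf v hv).2.2
    have := (hf v' hv').2.2
    rw [h₁] at *
    rw [← h₂] at *
    omega

lemma ncard_add_one_le_ncard_componentEdgeSet [Finite V] (F : SimpleGraph V) {a : V} {S : Set V}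
    (hS : ∀ v ∈ S, F.Reachable a v) (ha : a ∉ S) (hne : S.Nonempty)
    (hadj : ∀ z, F.Adj a z → z ∉ S) : S.ncard + 1 ≤ (F.componentEdgeSet a).ncard := by
  obtain ⟨w, hw⟩ := hne
  obtain ⟨p⟩ := hS w hw
  have hp : ¬ p.Nil := Walk.not_nil_of_ne fun h => ha (h ▸ hw)
  have hz := Walk.adj_snd hp
  rw [← Set.ncard_insert_of_notMem (hadj _ hz)]
  refine F.ncard_le_ncard_componentEdgeSet (fun v hv => ?_) ?_
  · rcases hv with rfl | hv
    exacts [hz.reachable, hS v hv]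
  · rintro (h | h)
    exacts [hz.ne h, ha h]

end ComponentEdges

variable {V : Type*} {G : SimpleGraph V}

/-- If `x` and `y` are joined in `F`, then all of `Sx ∪ Sy ∪ {y}` lies in the component of `x`.
Otherwise the first edge of a path from `x` into `Sx` (from `y` into `Sy`) is an extra edge, as its
far end is adjacent to `x` (to `y`) and so cannot lie in `Sx` (in `Sy`). -/
lemma ncard_add_ncard_add_one_le_ncard_edgeSet [Finite V] {F : SimpleGraph V} (hFG : F ≤ G)
    {x y : V} (hxy : 3 ≤ G.dist x y) {Sx Sy : Set V}
    (hSx : ∀ w ∈ Sx, w ≠ x ∧ w ≠ y ∧ ¬ G.Adj x w ∧ F.Reachable x w)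
    (hSy : ∀ w ∈ Sy, w ≠ y ∧ G.Adj x w ∧ F.Reachable y w)
    (hF : F.edgeSet.Nonempty) : Sx.ncard + Sy.ncard + 1 ≤ F.edgeSet.ncard := by
  have hx : x ∉ Sx := fun h => (hSx x h).1 rfl
  have hy : y ∉ Sy := fun h => (hSy y h).1 rfl
  have hdisj : Disjoint Sx Sy :=
    Set.disjoint_left.mpr fun w hwx hwy => (hSx w hwx).2.2.1 (hSy w hwy).2.1
  have hcomp a := Set.ncard_le_ncard (F.componentEdgeSet_subset a) (Set.toFinite F.edgeSet)
  by_cases hr : F.Reachable x y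
  · have hyS : y ∉ Sx ∪ Sy := by
      rintro (h | h)
      exacts [(hSx y h).2.1 rfl, hy h]
    have hxS : x ∉ insert y (Sx ∪ Sy) := by
      rintro (h | h | h)
      · exact ne_of_three_le_dist hxy h
      · exact hx h
      · exact (G.loopless.irrefl x) (hSy x h).2.1
    have := F.ncard_le_ncard_componentEdgeSet (S := insert y (Sx ∪ Sy)) (fun v hv => ?_) hxS
    · rw [Set.ncard_insert_of_notMem hyS, Set.ncard_union_eq hdisj] at this
      exact this.trans (hcomp x)
    · rcases hv with rfl | h | h
      exacts [hr, (hSx v h).2.2.2, hr.trans (hSy v h).2.2]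
  have hsum : (F.componentEdgeSet x).ncard + (F.componentEdgeSet y).ncard ≤ F.edgeSet.ncard := by
    rw [← Set.ncard_union_eq (disjoint_componentEdgeSet hr)]
    exact Set.ncard_le_ncard (Set.union_subset (F.componentEdgeSet_subset x)
      (F.componentEdgeSet_subset y))
  have hbx := F.ncard_le_ncard_componentEdgeSet (fun v hv => (hSx v hv).2.2.2) hx
  have hby := F.ncard_le_ncard_componentEdgeSet (fun v hv => (hSy v hv).2.2) hy
  rcases Sx.eq_empty_or_nonempty with rfl | hSxne
  · rcases Sy.eq_empty_or_nonempty with rfl | hSyne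
    · simp only [Set.ncard_empty, zero_add]
      exact (Set.ncard_pos (Set.toFinite _)).mpr hF
    · have := F.ncard_add_one_le_ncard_componentEdgeSet (fun v hv => (hSy v hv).2.2) hy hSyne
        fun z hz hzS => not_adj_of_adj_of_three_le_dist hxy (hSy z hzS).2.1 (hFG hz).symm
      simp only [Set.ncard_empty]
      omega
  · have := F.ncard_add_one_le_ncard_componentEdgeSet (fun v hv => (hSx v hv).2.2.2) hx hSxne
      fun z hz hzS => (hSx z hzS).2.2.1 (hFG hz)
    omega

lemma exists_isTree_le_forall_notMem_ncard_neighborSet_eq_one [Nontrivial V] (S : Set V)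
    (hS : ∀ u ∈ S, ∀ v ∈ S, ∃ p : G.Walk u v, ∀ w ∈ p.support, w ∈ S)
    (hSc : ∀ w ∉ S, ∃ z ∈ S, G.Adj w z) :
    ∃ T ≤ G, T.IsTree ∧ ∀ w ∉ S, (T.neighborSet w).ncard = 1 := by
  classical
  choose! f hfS hfG using hSc
  -- `G[S]` together with one pendant edge `w — f w` at each vertex `w ∉ S`
  let H : SimpleGraph V :=
    .fromRel fun a b => G.Adj a b ∧ (a ∈ S ∧ b ∈ S ∨ a ∉ S ∧ b = f a)
  have hHG : H ≤ G := fun a b ⟨_, h⟩ => h.elim (·.1) (·.1.symm)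
  have hH : ∀ w ∉ S, H.neighborSet w ⊆ {f w} := by
    rintro w hw b
      ⟨-, ⟨-, ⟨hwS, -⟩ | ⟨-, rfl⟩⟩ | ⟨-, ⟨-, hwS⟩ | ⟨hbS, rfl⟩⟩⟩
    exacts [(hw hwS).elim, rfl, (hw hwS).elim, (hw (hfS b hbS)).elim]
  have hHS : ∀ u ∈ S, ∀ v ∈ S, H.Reachable u v := by
    intro u hu v hv
    obtain ⟨p, hp⟩ := hS u hu v hv
    refine ⟨p.transfer H fun e he => ?_⟩
    induction e using Sym2.inductionOn with
    | _ a b =>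
      have hab := p.adj_of_mem_edges he
      exact ⟨hab.ne, .inl ⟨hab, .inl ⟨hp a (p.fst_mem_support_of_mem_edges he),
        hp b (p.snd_mem_support_of_mem_edges he)⟩⟩⟩
  have hHf : ∀ w ∉ S, H.Adj w (f w) := fun w hw =>
    ⟨(hfG w hw).ne, .inl ⟨hfG w hw, .inr ⟨hw, rfl⟩⟩⟩
  have hHconn : H.Connected := by
    have : ∀ a, ∃ s ∈ S, H.Reachable a s := fun a =>
      if ha : a ∈ S then ⟨a, ha, .rfl⟩ else ⟨f a, hfS a ha, (hHf a ha).reachable⟩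
    refine ⟨fun a b => ?_⟩
    obtain ⟨s, hs, has⟩ := this a
    obtain ⟨t, ht, hbt⟩ := this b
    exact (has.trans (hHS s hs t ht)).trans hbt.symm
  obtain ⟨T, hTH, hT⟩ := hHconn.exists_isTree_le
  refine ⟨T, hTH.trans hHG, hT, fun w hw => Set.ncard_eq_one.mpr ⟨f w, ?_⟩⟩
  exact ((T.neighborSet_nonempty).mpr (hT.connected.preconnected.not_isIsolated w)
    |>.subset_singleton_iff).mp ((neighborSet_mono hTH w).trans (hH w hw))

end SimpleGraph

section Coloring

variable {V : Type*} {G T : SimpleGraph V} {vcol : V → ℕ} {ecol : Sym2 V → ℕ}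

theorem IsMCColoring.ncard_image_add_le [Fintype V] (hmc : IsMCColoring G ecol)
    {x y : V} (hxy : 3 ≤ G.dist x y) :
    (ecol '' G.edgeSet).ncard + (Fintype.card V - 2) ≤ G.edgeSet.ncard := by
  classical
  let base : V → V := fun w => if G.Adj x w then y else x
  unfold IsMCColoring at hmc
  choose p _ col hcol using hmc
  let t : V → ℕ := fun w => col (base w) w
  let C := G.edgeFinset.image ecol
  let W : Finset V := {x, y}ᶜ
  have hbase : ∀ w ∈ W, w ≠ base w := by
    intro w hw
    simp only [W, Finset.mem_compl, Finset.mem_insert, Finset.mem_singleton, not_or] at hw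
    unfold base
    split_ifs <;> simp [hw]
  have htC : ∀ w ∈ W, t w ∈ C := by
    intro w hw
    have hnil : ¬ (p (base w) w).Nil := Walk.not_nil_of_ne (hbase w hw).symm
    have he := Walk.mk_start_snd_mem_edges hnil
    exact Finset.mem_image.mpr ⟨_, mem_edgeFinset.mpr ((p _ _).edges_subset_edgeSet he),
      hcol _ _ _ he⟩
  have hfiber : ∀ c ∈ C,
      (W.filter (t · = c)).card + 1 ≤ (G.edgeFinset.filter (ecol · = c)).card := by
    intro c hc
    obtain ⟨e, he, hec⟩ := Finset.mem_image.mp hc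
    have hcard :
        (G.edgeFinset.filter (ecol · = c)).card = (G.colorClass ecol c).edgeSet.ncard := by
      rw [edgeSet_colorClass, ← Set.ncard_coe_finset, Finset.coe_filter]
      simp only [mem_edgeFinset]
    rw [hcard, ← Finset.card_filter_add_card_filter_not (p := fun w => ¬ G.Adj x w),
      ← Set.ncard_coe_finset, ← Set.ncard_coe_finset]
    refine ncard_add_ncard_add_one_le_ncard_edgeSet colorClass_le hxy (fun w hw => ?_)
      (fun w hw => ?_) ⟨e, by rw [edgeSet_colorClass]; exact ⟨mem_edgeFinset.mp he, hec⟩⟩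
    all_goals
      simp only [Finset.mem_coe, Finset.mem_filter, W, Finset.mem_compl, Finset.mem_insert,
        Finset.mem_singleton, not_or, not_not] at hw
      obtain ⟨⟨⟨hwx, hwy⟩, rfl⟩, hadj⟩ := hw
      have : (G.colorClass ecol (t w)).Reachable (base w) w :=
        reachable_colorClass_of_walk _ (hcol (base w) w)
      simp only [base, hadj, if_true, if_false] at this
    · exact ⟨hwx, hwy, hadj, this⟩
    · exact ⟨hwy, hadj, this⟩
  have hW : W.card = Fintype.card V - 2 := by
    rw [Finset.card_compl, Finset.card_pair (ne_of_three_le_dist hxy)]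
  calc (ecol '' G.edgeSet).ncard + (Fintype.card V - 2)
      = ∑ c ∈ C, ((W.filter (t · = c)).card + 1) := by
        rw [Finset.sum_add_distrib, ← Finset.card_eq_sum_card_fiberwise htC, hW, add_comm,
          ← coe_edgeFinset, ← Finset.coe_image, Set.ncard_coe_finset]
        simp [C]
    _ ≤ ∑ c ∈ C, (G.edgeFinset.filter (ecol · = c)).card := Finset.sum_le_sum hfiber
    _ = G.edgeSet.ncard := by
        rw [← Finset.card_eq_sum_card_fiberwise fun e he => Finset.mem_image_of_mem ecol he,
          ← Set.ncard_coe_finset, coe_edgeFinset]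

lemma IsTMCColoring.isMCColoring (h : IsTMCColoring G vcol ecol) : IsMCColoring G ecol :=
  fun u v => by
    obtain ⟨p, hp, c, hc, -⟩ := h u v
    exact ⟨p, hp, c, hc⟩

lemma IsTMCPath.vcol_mem_image {u v w : V} {p : G.Walk u v} (hp : IsTMCPath G vcol ecol p)
    (hw : w ∈ p.support) (hwu : w ≠ u) (hwv : w ≠ v) : vcol w ∈ ecol '' G.edgeSet := by
  obtain ⟨-, c, hc, hv⟩ := hp
  have hnil : ¬ p.Nil := fun h => hwu (by simpa [Walk.nil_iff_support_eq.mp h] using hw)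
  have he := Walk.mk_start_snd_mem_edges hnil
  exact ⟨_, p.edges_subset_edgeSet he, (hc _ he).trans (hv w hw hwu hwv).symm⟩

lemma bddAbove_leafCount [Finite V] (G : SimpleGraph V) :
    BddAbove {k | ∃ T : SimpleGraph V, T ≤ G ∧ T.IsTree ∧ leafCount T = k} :=
  ⟨Nat.card V, by rintro _ ⟨T, -, -, rfl⟩; exact Set.ncard_le_card _⟩

lemma leafCount_le_maxLeaves [Finite V] (hTG : T ≤ G) (hT : T.IsTree) :
    leafCount T ≤ maxLeaves G :=
  le_csSup (bddAbove_leafCount G) ⟨T, hTG, hT, rfl⟩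

lemma exists_isTree_leafCount_eq_maxLeaves [Finite V] (hG : G.Connected) :
    ∃ T ≤ G, T.IsTree ∧ leafCount T = maxLeaves G := by
  obtain ⟨T, hTG, hT⟩ := hG.exists_isTree_le
  obtain ⟨T, hTG, hT, h⟩ := Nat.sSup_mem (s := {k | ∃ T ≤ G, T.IsTree ∧ leafCount T = k})
    ⟨_, T, hTG, hT, rfl⟩ (bddAbove_leafCount G)
  exact ⟨T, hTG, hT, h⟩

theorem IsTMCColoring.totalColorsUsed_add_card_le [Fintype V] (h : IsTMCColoring G vcol ecol)
    {x y : V} (hxy : 3 ≤ G.dist x y) :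
    totalColorsUsed G vcol ecol + Fintype.card V ≤ G.edgeSet.ncard + 2 + maxLeaves G := by
  have : Nontrivial V := ⟨x, y, ne_of_three_le_dist hxy⟩
  set S := vcol ⁻¹' (ecol '' G.edgeSet)
  have hS : ∀ u ∈ S, ∀ v ∈ S, ∃ p : G.Walk u v, ∀ w ∈ p.support, w ∈ S := by
    intro u hu v hv
    obtain ⟨p, hp⟩ := h u v
    refine ⟨p, fun w hw => ?_⟩
    by_cases hwu : w = u
    · exact hwu ▸ hu
    by_cases hwv : w = v
    · exact hwv ▸ hv
    exact hp.vcol_mem_image hw hwu hwv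
  have hSc : ∀ w ∉ S, ∃ z ∈ S, G.Adj w z := by
    intro w _
    obtain ⟨u, huw, hwu⟩ := exists_ne_not_adj_of_three_le_dist hxy w
    obtain ⟨p, hp⟩ := h w u
    have hnil : ¬ p.Nil := Walk.not_nil_of_ne huw.symm
    have hadj := Walk.adj_snd hnil
    exact ⟨p.snd, hp.vcol_mem_image (p.getVert_mem_support 1) hadj.ne'
      fun h => hwu (h ▸ hadj), hadj⟩
  obtain ⟨T, hTG, hT, hleaf⟩ := exists_isTree_le_forall_notMem_ncard_neighborSet_eq_one _ hS hSc
  have hleaves : Sᶜ.ncard ≤ leafCount T :=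
    Set.ncard_le_ncard (fun w hw => hleaf w hw) (Set.toFinite _)
  have hcolors : totalColorsUsed G vcol ecol ≤ (ecol '' G.edgeSet).ncard + Sᶜ.ncard := by
    rw [totalColorsUsed, Set.union_comm, ← Set.union_sdiff_self, ← Set.image_compl_preimage]
    exact (Set.ncard_union_le _ _).trans
      (Nat.add_le_add_left (Set.ncard_image_le (Set.toFinite _)) _)
  have := h.isMCColoring.ncard_image_add_le hxy
  have := leafCount_le_maxLeaves hTG hT
  have := Fintype.one_lt_card_iff_nontrivial.mpr ‹_›
  omega

lemma SimpleGraph.IsTree.isTMCColoring (hT : T.IsTree) (hTG : T ≤ G)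
    (c : ℕ) (hecol : ∀ e ∈ T.edgeSet, ecol e = c)
    (hvcol : ∀ v, (T.neighborSet v).ncard ≠ 1 → vcol v = c) : IsTMCColoring G vcol ecol := by
  classical
  intro u v
  obtain ⟨p, hp⟩ := (hT.connected.preconnected u v).some.toPath
  have hpG : ∀ e ∈ p.edges, e ∈ G.edgeSet := fun e he =>
    edgeSet_mono hTG (p.edges_subset_edgeSet he)
  refine ⟨p.transfer G hpG, hp.transfer hpG, c, fun e he => ?_, fun w hw hwu hwv => ?_⟩
  · rw [Walk.edges_transfer] at he
    exact hecol e (p.edges_subset_edgeSet he)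
  · rw [Walk.support_transfer] at hw
    exact hvcol w (hp.ncard_neighborSet_ne_one hw hwu hwv)

lemma SimpleGraph.IsTree.exists_isTMCColoring_totalColorsUsed_eq [Finite V] [Nontrivial V]
    (hT : T.IsTree) (hTG : T ≤ G) : ∃ vcol ecol, IsTMCColoring G vcol ecol ∧
      totalColorsUsed G vcol ecol = 1 + leafCount T + (G.edgeSet \ T.edgeSet).ncard := by
  classical
  obtain ⟨enc, henc⟩ := Countable.exists_injective_nat (V ⊕ Sym2 V)
  let L := {v | (T.neighborSet v).ncard = 1}
  let f : V ⊕ Sym2 V → ℕ := fun s => enc s + 1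
  have hf : f.Injective := fun a b h => henc (Nat.succ_injective h)
  let vcol : V → ℕ := fun v => if v ∈ L then f (.inl v) else 0
  let ecol : Sym2 V → ℕ := fun e => if e ∈ T.edgeSet then 0 else f (.inr e)
  refine ⟨vcol, ecol, hT.isTMCColoring hTG 0 (fun e he => if_pos he) (fun v hv => if_neg hv),
    ?_⟩
  obtain ⟨a, b, hab⟩ : ∃ a b, T.Adj a b := by
    obtain ⟨a⟩ := hT.connected.nonempty
    obtain ⟨b, hb⟩ := (T.neighborSet_nonempty).mpr (hT.connected.preconnected.not_isIsolated a)
    exact ⟨a, b, hb⟩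
  have hcolors : Set.range vcol ∪ ecol '' G.edgeSet =
      insert 0 (f '' (Sum.inl '' L ∪ Sum.inr '' (G.edgeSet \ T.edgeSet))) := by
    ext k
    simp only [Set.mem_union, Set.mem_range, Set.mem_image, Set.mem_insert_iff, Set.mem_sdiff,
      vcol, ecol]
    constructor
    · rintro (⟨v, rfl⟩ | ⟨e, he, rfl⟩)
      · split_ifs with hv
        exacts [.inr ⟨_, .inl ⟨v, hv, rfl⟩, rfl⟩, .inl rfl]
      · split_ifs with he'
        exacts [.inl rfl, .inr ⟨_, .inr ⟨e, ⟨he, he'⟩, rfl⟩, rfl⟩]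
    · rintro (rfl | ⟨_, ⟨v, hv, rfl⟩ | ⟨e, ⟨he, he'⟩, rfl⟩, rfl⟩)
      · exact .inr ⟨s(a, b), hTG hab, if_pos hab⟩
      · exact .inl ⟨v, if_pos hv⟩
      · exact .inr ⟨e, he, if_neg he'⟩
  have hdisj : Disjoint (Sum.inl '' L : Set (V ⊕ Sym2 V)) (Sum.inr '' (G.edgeSet \ T.edgeSet)) :=
    Set.disjoint_left.mpr fun _ ⟨_, _, h⟩ ⟨_, _, h'⟩ => Sum.inl_ne_inr (h.trans h'.symm)
  rw [totalColorsUsed, hcolors, Set.ncard_insert_of_notMem (by simp [f]),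
    Set.ncard_image_of_injective _ hf, Set.ncard_union_eq hdisj,
    Set.ncard_image_of_injective _ Sum.inl_injective,
    Set.ncard_image_of_injective _ Sum.inr_injective, leafCount]
  ring

end Coloring

/-- If `G` is a connected graph of order `n > 3` with diameter at least `3`,
then `tmc(G) = m - n + 2 + l(G)`. -/
theorem stmt_11 {V : Type*} [Fintype V] (G : SimpleGraph V)
    (hn : 3 < Fintype.card V) (hG : G.Connected) (hdiam : 3 ≤ G.diam) :
    (tmc G : ℤ) = (G.edgeSet.ncard : ℤ) - Fintype.card V + 2 + maxLeaves G := by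
  have : Nontrivial V := Fintype.one_lt_card_iff_nontrivial.mp (by omega)
  obtain ⟨x, y, hxy⟩ : ∃ x y, 3 ≤ G.dist x y := by
    obtain ⟨x, y, h⟩ := G.exists_dist_eq_diam
    exact ⟨x, y, h ▸ hdiam⟩
  obtain ⟨T, hTG, hT, hTmax⟩ := exists_isTree_leafCount_eq_maxLeaves hG
  obtain ⟨vcol, ecol, hTMC, hcount⟩ := hT.exists_isTMCColoring_totalColorsUsed_eq hTG
  have hTcard : T.edgeSet.ncard + 1 = Fintype.card V := by
    simpa [Nat.card_eq_fintype_card] using (isTree_iff_connected_and_card.mp hT).2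
  have hdiff := Set.ncard_sdiff (edgeSet_mono hTG)
  have hle := Set.ncard_le_ncard (edgeSet_mono hTG) (Set.toFinite G.edgeSet)
  have htmc : tmc G = totalColorsUsed G vcol ecol := by
    refine IsGreatest.csSup_eq ⟨⟨vcol, ecol, hTMC, rfl⟩, ?_⟩
    rintro k ⟨vcol', ecol', h, rfl⟩
    have := h.totalColorsUsed_add_card_le hxy
    omega
  omega
end
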